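/- arXiv:2509.11011 — 2 statements merged into one kernel-verified Lean document; each statement's English description precedes it below -/
import Mathlib

section
/- Let λ > 0, T > 0, and d(t) = (a − F/λ)e^{−λt} + F/λ with aF ≥ 0. Then ∫₀^T d(t)·d(T−t) dt ≥ 0. -/
open Real

lemma aux_tanh (x : ℝ) (hx : 0 ≤ x) : 2 - x ≤ (x + 2) * Real.exp (-x) := by
  set h : ℝ → ℝ := fun y => (y + 2) * Real.exp (-y) + y with hh
  have hderiv : ∀ y : ℝ, HasDerivAt h (1 - (y + 1) * Real.exp (-y)) y := by
    intro y
    have h1 : HasDerivAt (fun y : ℝ => Real.exp (-y)) (-Real.exp (-y)) y := by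
      simpa using (hasDerivAt_neg y).exp
    have h2 : HasDerivAt (fun y : ℝ => (y + 2) * Real.exp (-y))
        (1 * Real.exp (-y) + (y + 2) * (-Real.exp (-y))) y :=
      ((hasDerivAt_id y).add_const 2).mul h1
    have h3 : HasDerivAt h (1 * Real.exp (-y) + (y + 2) * (-Real.exp (-y)) + 1) y :=
      h2.add (hasDerivAt_id y)
    convert h3 using 1
    ring
  have hmono : Monotone h := by
    apply monotone_of_deriv_nonneg
    · exact fun y => (hderiv y).differentiableAt
    · intro y
      rw [(hderiv y).deriv]
      have : (y + 1) * Real.exp (-y) ≤ 1 := by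
        have := Real.add_one_le_exp y
        have hpos := Real.exp_pos (-y)
        calc (y + 1) * Real.exp (-y) ≤ Real.exp y * Real.exp (-y) := by
              apply mul_le_mul_of_nonneg_right _ hpos.le
              linarith
          _ = 1 := by rw [← Real.exp_add]; simp
      linarith
  have := hmono hx
  simp only [hh] at this
  norm_num at this
  linarith

/-- For `d(t) = (a - F/λ) e^{-λ t} + F/λ`, `λ > 0`, `T > 0`, `a F ≥ 0`:
`∫₀^T d(t) · d(T - t) dt ≥ 0`. -/
theorem stmt13 (lam T a F : ℝ) (hlam : 0 < lam) (hT : 0 < T) (haF : 0 ≤ a * F)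
    (d : ℝ → ℝ)
    (hd : ∀ t, d t = (a - F / lam) * Real.exp (-lam * t) + F / lam) :
    0 ≤ ∫ t in (0:ℝ)..T, d t * d (T - t) := by
  set c : ℝ := F / lam with hc
  set b : ℝ := a - c with hb
  set e : ℝ := Real.exp (-lam * T) with he
  -- antiderivative
  set G : ℝ → ℝ := fun t =>
    (b ^ 2 * e + c ^ 2) * t - (b * c / lam) * Real.exp (-lam * t)
      + (b * c * e / lam) * Real.exp (lam * t) with hG
  have hepos : 0 < e := Real.exp_pos _
  have hderiv : ∀ t : ℝ, HasDerivAt G (d t * d (T - t)) t := by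
    intro t
    have h1 : HasDerivAt (fun t : ℝ => Real.exp (-lam * t)) (-lam * Real.exp (-lam * t)) t := by
      simpa [mul_comm] using ((hasDerivAt_id t).const_mul (-lam)).exp
    have h2 : HasDerivAt (fun t : ℝ => Real.exp (lam * t)) (lam * Real.exp (lam * t)) t := by
      simpa [mul_comm] using ((hasDerivAt_id t).const_mul lam).exp
    have h0 : HasDerivAt (fun t : ℝ => (b ^ 2 * e + c ^ 2) * t) (b ^ 2 * e + c ^ 2) t := by
      simpa using (hasDerivAt_id t).const_mul (b ^ 2 * e + c ^ 2)
    have h3 := (h0.sub (h1.const_mul (b * c / lam))).add (h2.const_mul (b * c * e / lam))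
    have hval : (b ^ 2 * e + c ^ 2) - (b * c / lam) * (-lam * Real.exp (-lam * t))
        + (b * c * e / lam) * (lam * Real.exp (lam * t)) = d t * d (T - t) := by
      have hexp : Real.exp (-lam * (T - t)) = e * Real.exp (lam * t) := by
        rw [he, ← Real.exp_add]; ring_nf
      have hX : Real.exp (-lam * t) = (Real.exp (lam * t))⁻¹ := by
        rw [← Real.exp_neg]; ring_nf
      have hXne : Real.exp (lam * t) ≠ 0 := (Real.exp_pos _).ne'
      rw [hd t, hd (T - t), hexp, hX]
      field_simp
      ring
    rw [← hval]
    exact h3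
  have hcontd : Continuous d := by
    have : d = fun t => b * Real.exp (-lam * t) + c := funext hd
    rw [this]; fun_prop
  have hcont : Continuous fun t => d t * d (T - t) :=
    hcontd.mul (hcontd.comp (continuous_const.sub continuous_id))
  have hint : ∫ t in (0:ℝ)..T, d t * d (T - t) = G T - G 0 :=
    intervalIntegral.integral_eq_sub_of_hasDerivAt (fun t _ => hderiv t)
      (hcont.intervalIntegrable _ _)
  have hene : e ≠ 0 := hepos.ne'
  have hX : Real.exp (lam * T) = e⁻¹ := by rw [he, ← Real.exp_neg]; ring_nf
  have hg0 : G 0 = -(b * c / lam) + b * c * e / lam := by simp [hG]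
  have hgT : G T = (b ^ 2 * e + c ^ 2) * T - (b * c / lam) * e + b * c / lam := by
    simp only [hG]
    rw [hX, ← he]
    field_simp
  have hGval : G T - G 0 = (b ^ 2 * e + c ^ 2) * T + 2 * (b * c) * ((1 - e) / lam) := by
    rw [hg0, hgT]
    field_simp
    ring
  rw [hint, hGval]
  -- key facts
  have hac : 0 ≤ (b + c) * c := by
    have hbc : b + c = a := by rw [hb]; ring
    rw [hbc, hc]
    have : a * (F / lam) = (a * F) / lam := by ring
    rw [this]
    exact div_nonneg haF hlam.le
  have hxT : 0 < lam * T := mul_pos hlam hT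
  have key1 : lam * T * e + e ≤ 1 := by
    have h1 := Real.add_one_le_exp (lam * T)
    have : (lam * T + 1) * e ≤ Real.exp (lam * T) * e :=
      mul_le_mul_of_nonneg_right h1 hepos.le
    have hXe : Real.exp (lam * T) * e = 1 := by
      rw [he, ← Real.exp_add]; simp
    nlinarith
  have key2 : 2 - lam * T ≤ (lam * T + 2) * e := by
    have := aux_tanh (lam * T) hxT.le
    have hee : Real.exp (-(lam * T)) = e := by rw [he]; ring_nf
    rwa [hee] at this
  have hkey : 0 ≤ lam * T * e * b ^ 2 + 2 * (1 - e) * (b * c) + lam * T * c ^ 2 := by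
    have t1 : 0 ≤ lam * T * e * (b + c) ^ 2 :=
      mul_nonneg (mul_nonneg hxT.le hepos.le) (sq_nonneg _)
    have t2 : 0 ≤ 2 * (1 - e - lam * T * e) * ((b + c) * c) :=
      mul_nonneg (by linarith) hac
    have t3 : 0 ≤ (lam * T + lam * T * e - 2 * (1 - e)) * c ^ 2 :=
      mul_nonneg (by linarith) (sq_nonneg _)
    have hsum : lam * T * e * b ^ 2 + 2 * (1 - e) * (b * c) + lam * T * c ^ 2
        = lam * T * e * (b + c) ^ 2 + 2 * (1 - e - lam * T * e) * ((b + c) * c)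
          + (lam * T + lam * T * e - 2 * (1 - e)) * c ^ 2 := by ring
    rw [hsum]
    linarith
  have heq : (b ^ 2 * e + c ^ 2) * T + 2 * (b * c) * ((1 - e) / lam)
      = (lam * T * e * b ^ 2 + 2 * (1 - e) * (b * c) + lam * T * c ^ 2) / lam := by
    field_simp
    ring
  rw [heq]
  exact div_nonneg hkey hlam.le
end

section
/- Let λ > 0, T > 0, a, F ∈ ℝ with aF ≥ 0, and d(t) = (a − F/λ)e^{−λt} + F/λ. Then ∫₀^T d(t)·d(T−t) dt = a²e^{−λT}·T + (aF/λ)·∫₀^T(−2e^{−λT} + e^{−λt} + e^{−λ(T−t)})dt + (F²/λ²)·∫₀^T(e^{−λT} − e^{−λt} − e^{−λ(T−t)} + 1)dt, and each of the three summands is nonnegative. -/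
/-- Explicit decomposition of `∫₀^T d(t) d(T-t) dt` for
`d(t) = (a - F/λ)e^{-λ t} + F/λ` with `aF ≥ 0`, into three nonnegative summands. -/
theorem stmt19 (lam T a F : ℝ) (hlam : 0 < lam) (hT : 0 < T) (haF : 0 ≤ a * F)
    (d : ℝ → ℝ)
    (hd : ∀ t, d t = (a - F / lam) * Real.exp (-lam * t) + F / lam) :
    (∫ t in (0:ℝ)..T, d t * d (T - t)) =
        a ^ 2 * Real.exp (-lam * T) * T
      + (a * F / lam) *
          (∫ t in (0:ℝ)..T,
            -2 * Real.exp (-lam * T) + Real.exp (-lam * t) + Real.exp (-lam * (T - t)))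
      + (F ^ 2 / lam ^ 2) *
          (∫ t in (0:ℝ)..T,
            Real.exp (-lam * T) - Real.exp (-lam * t) - Real.exp (-lam * (T - t)) + 1) ∧
    0 ≤ a ^ 2 * Real.exp (-lam * T) * T ∧
    0 ≤ (a * F / lam) *
          (∫ t in (0:ℝ)..T,
            -2 * Real.exp (-lam * T) + Real.exp (-lam * t) + Real.exp (-lam * (T - t))) ∧
    0 ≤ (F ^ 2 / lam ^ 2) *
          (∫ t in (0:ℝ)..T,
            Real.exp (-lam * T) - Real.exp (-lam * t) - Real.exp (-lam * (T - t)) + 1) := by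
  have hlne : lam ≠ 0 := hlam.ne'
  have key : ∀ t : ℝ, d t * d (T - t) =
      a ^ 2 * Real.exp (-lam * T)
      + (a * F / lam) *
          (-2 * Real.exp (-lam * T) + Real.exp (-lam * t) + Real.exp (-lam * (T - t)))
      + (F ^ 2 / lam ^ 2) *
          (Real.exp (-lam * T) - Real.exp (-lam * t) - Real.exp (-lam * (T - t)) + 1) := by
    intro t
    have h1 : Real.exp (-lam * t) * Real.exp (-lam * (T - t)) = Real.exp (-lam * T) := by
      rw [← Real.exp_add]; ring_nf
    rw [hd, hd]
    linear_combination (a - F / lam) ^ 2 * h1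
  constructor
  · have hi1 : IntervalIntegrable (fun _ : ℝ => a ^ 2 * Real.exp (-lam * T)) MeasureTheory.volume 0 T :=
      intervalIntegrable_const
    have hi2 : IntervalIntegrable (fun t : ℝ => (a * F / lam) *
        (-2 * Real.exp (-lam * T) + Real.exp (-lam * t) + Real.exp (-lam * (T - t))))
        MeasureTheory.volume 0 T := by
      apply Continuous.intervalIntegrable; fun_prop
    have hi3 : IntervalIntegrable (fun t : ℝ => (F ^ 2 / lam ^ 2) *
        (Real.exp (-lam * T) - Real.exp (-lam * t) - Real.exp (-lam * (T - t)) + 1))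
        MeasureTheory.volume 0 T := by
      apply Continuous.intervalIntegrable; fun_prop
    rw [intervalIntegral.integral_congr (fun t _ => key t),
      intervalIntegral.integral_add (hi1.add hi2) hi3,
      intervalIntegral.integral_add hi1 hi2,
      intervalIntegral.integral_const, intervalIntegral.integral_const_mul,
      intervalIntegral.integral_const_mul]
    simp only [smul_eq_mul]
    ring
  refine ⟨by positivity, ?_, ?_⟩
  · apply mul_nonneg (by positivity)
    apply intervalIntegral.integral_nonneg hT.le
    intro t ht
    have h1 : Real.exp (-lam * T) ≤ Real.exp (-lam * t) :=
      Real.exp_le_exp.2 (by nlinarith [ht.1, ht.2])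
    have h2 : Real.exp (-lam * T) ≤ Real.exp (-lam * (T - t)) :=
      Real.exp_le_exp.2 (by nlinarith [ht.1, ht.2])
    linarith
  · apply mul_nonneg (by positivity)
    apply intervalIntegral.integral_nonneg hT.le
    intro t ht
    have h1 : Real.exp (-lam * t) ≤ 1 := Real.exp_le_one_iff.2 (by nlinarith [ht.1])
    have h2 : Real.exp (-lam * (T - t)) ≤ 1 := Real.exp_le_one_iff.2 (by nlinarith [ht.2])
    nlinarith [Real.exp_pos (-lam*t), Real.exp_pos (-lam*(T-t)),
      (by rw [← Real.exp_add]; ring_nf : Real.exp (-lam * t) * Real.exp (-lam * (T - t)) = Real.exp (-lam * T))]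
end
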